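/- Let Y be a positive bounded random variable bounded below by c > 0 with E[Y] = μ, and T_n = log((1/n)∑_{i=1}^n Y_i) for i.i.d. copies Y_i. Then log μ - E[T_n] ≤ Var(Y)/(2 c^2 n), so the bias of T_n as an estimator of log μ is O(1/n). -/

import Mathlib

/-!
Write `S` for the sample mean and `m = E[S] = E[Y]`. The function `x ↦ log x + x² / (2c²)` is
convex on `[c, ∞)` (its second derivative is `1/c² - 1/x² ≥ 0`), so it lies above its tangent
at `m`; rearranged, `log S ≥ log m + (S - m) / m - (S - m)² / (2c²)` whenever `S, m ≥ c`.
Taking expectations kills the linear term and leaves `log m - E[log S] ≤ Var[S] / (2c²)`, and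
`Var[S] = Var[Y] / n` for the mean of `n` independent copies.
-/

open Real MeasureTheory ProbabilityTheory Set

lemma ConvexOn.add_mul_sub_le_of_hasDerivAt {S : Set ℝ} {f : ℝ → ℝ} {f' x y : ℝ}
    (hf : ConvexOn ℝ S f) (hx : x ∈ S) (hy : y ∈ S) (hd : HasDerivAt f f' x) :
    f x + f' * (y - x) ≤ f y := by
  rcases lt_trichotomy x y with hxy | rfl | hxy
  · have := hf.le_slope_of_hasDerivAt hx hy hxy hd
    rw [slope_def_field, le_div_iff₀ (sub_pos.2 hxy)] at this
    linarith
  · simp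
  · have := hf.slope_le_of_hasDerivAt hy hx hxy hd
    rw [slope_def_field, div_le_iff₀ (sub_pos.2 hxy)] at this
    linarith

lemma hasDerivAt_log_add_sq_div {x : ℝ} (hx : x ≠ 0) (a : ℝ) :
    HasDerivAt (fun x => log x + x ^ 2 / (2 * a)) (x⁻¹ + x / a) x :=
  ((hasDerivAt_log hx).add ((hasDerivAt_pow 2 x).div_const (2 * a))).congr_deriv <| by
    by_cases ha : a = 0
    · simp [ha]
    · field_simp; ring

lemma convexOn_log_add_sq_div {c : ℝ} (hc : 0 < c) :
    ConvexOn ℝ (Ici c) (fun x => log x + x ^ 2 / (2 * c ^ 2)) := by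
  refine convexOn_of_hasDerivWithinAt2_nonneg (convex_Ici c)
    (f' := fun x => x⁻¹ + x / c ^ 2) (f'' := fun x => -(x ^ 2)⁻¹ + (c ^ 2)⁻¹)
    ((continuousOn_log.mono fun x hx => (hc.trans_le hx).ne').add (by fun_prop))
    ?_ ?_ ?_ <;> simp only [interior_Ici, mem_Ioi] <;> intro x hx
  · exact (hasDerivAt_log_add_sq_div (hc.trans hx).ne' _).hasDerivWithinAt
  · exact ((hasDerivAt_inv (hc.trans hx).ne').add
      ((hasDerivAt_id x).div_const (c ^ 2))).hasDerivWithinAt.congr_deriv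
        (by simp [div_eq_mul_inv])
  · have : (x ^ 2)⁻¹ ≤ (c ^ 2)⁻¹ := inv_anti₀ (by positivity) (by gcongr)
    linarith

lemma log_add_div_sub_sq_le_log {c m s : ℝ} (hc : 0 < c) (hm : c ≤ m) (hs : c ≤ s) :
    log m + (s - m) / m - (s - m) ^ 2 / (2 * c ^ 2) ≤ log s := by
  have hm0 : m ≠ 0 := (hc.trans_le hm).ne'
  have := (convexOn_log_add_sq_div hc).add_mul_sub_le_of_hasDerivAt hm hs
    (hasDerivAt_log_add_sq_div hm0 _)
  have e : (s - m) / m - (s - m) ^ 2 / (2 * c ^ 2)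
      = (m⁻¹ + m / c ^ 2) * (s - m) + m ^ 2 / (2 * c ^ 2) - s ^ 2 / (2 * c ^ 2) := by
    field_simp; ring
  linarith

section JensenGap

variable {Ω : Type*} [MeasurableSpace Ω] {P : Measure Ω} [IsProbabilityMeasure P]

lemma MeasureTheory.Integrable.log_of_ae_le {X : Ω → ℝ} {c : ℝ} (hX : Integrable X P)
    (hc : 0 < c) (hcX : ∀ᵐ ω ∂P, c ≤ X ω) : Integrable (fun ω => log (X ω)) P := by
  refine ((integrable_const |log c|).add hX.abs).mono'
    (measurable_log.comp_aemeasurable hX.aemeasurable).aestronglyMeasurable ?_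
  filter_upwards [hcX] with ω hω
  rw [Pi.add_apply, norm_eq_abs, abs_le]
  constructor
  · have := log_le_log hc hω
    linarith [neg_abs_le (log c), le_abs_self (X ω)]
  · have := log_le_sub_one_of_pos (hc.trans_le hω)
    linarith [abs_nonneg (log c), le_abs_self (X ω)]

lemma log_integral_sub_integral_log_le {X : Ω → ℝ} {c : ℝ} (hc : 0 < c) (hX : MemLp X 2 P)
    (hcX : ∀ᵐ ω ∂P, c ≤ X ω) :
    log (P[X]) - ∫ ω, log (X ω) ∂P ≤ Var[X; P] / (2 * c ^ 2) := by
  set m := P[X]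
  have hXint : Integrable X P := hX.integrable one_le_two
  have hm : c ≤ m := by
    simpa using integral_mono_ae (integrable_const c) hXint hcX
  have hdev : Integrable (fun ω => X ω - m) P := hXint.sub (integrable_const m)
  have hsq : Integrable (fun ω => (X ω - m) ^ 2) P := (hX.sub (memLp_const m)).integrable_sq
  have hmean : ∫ ω, (X ω - m) / m ∂P = 0 := by
    rw [integral_div, integral_sub hXint (integrable_const m)]
    simp [m]
  have hlin : Integrable (fun ω => log m + (X ω - m) / m) P :=
    (integrable_const _).add (hdev.div_const m)
  suffices log m - Var[X; P] / (2 * c ^ 2) ≤ ∫ ω, log (X ω) ∂P by linarith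
  calc log m - Var[X; P] / (2 * c ^ 2)
      = ∫ ω, (log m + (X ω - m) / m - (X ω - m) ^ 2 / (2 * c ^ 2)) ∂P := by
        rw [integral_sub hlin (hsq.div_const _), integral_add (integrable_const _)
          (hdev.div_const m), hmean, integral_div, variance_eq_integral hX.aemeasurable]
        simp [m]
    _ ≤ ∫ ω, log (X ω) ∂P :=
        integral_mono_ae (hlin.sub (hsq.div_const _))
          (hXint.log_of_ae_le hc hcX)
          (hcX.mono fun ω hω => log_add_div_sub_sq_le_log hc hm hω)

end JensenGap

section SampleMean

variable {ι Ω : Type*} [Fintype ι]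

noncomputable def sampleMean (Y : Ω → ℝ) (ω : ι → Ω) : ℝ :=
  (1 / (Fintype.card ι : ℝ)) * ∑ i, Y (ω i)

lemma sampleMean_fin {n : ℕ} (Y : Ω → ℝ) (ω : Fin n → Ω) :
    sampleMean Y ω = (1 / (n : ℝ)) * ∑ i, Y (ω i) := by
  rw [sampleMean, Fintype.card_fin]

lemma le_sampleMean [Nonempty ι] {Y : Ω → ℝ} {c : ℝ} (hc : ∀ ω, c ≤ Y ω) (ω : ι → Ω) :
    c ≤ sampleMean Y ω := by
  have hcard : (0 : ℝ) < Fintype.card ι := by exact_mod_cast Fintype.card_pos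
  have := Finset.card_nsmul_le_sum Finset.univ (fun i => Y (ω i)) c fun i _ => hc (ω i)
  rw [sampleMean, one_div, inv_mul_eq_div, le_div_iff₀ hcard]
  simpa [nsmul_eq_mul, mul_comm] using this

variable [MeasurableSpace Ω] {P : Measure Ω} [IsProbabilityMeasure P]

lemma memLp_sampleMean {Y : Ω → ℝ} {p : ENNReal} (hY : MemLp Y p P) :
    MemLp (sampleMean Y) p (Measure.pi fun _ : ι => P) :=
  (memLp_finsetSum (Finset.univ : Finset ι) fun i _ =>
    hY.comp_measurePreserving (measurePreserving_eval _ i)).const_mul _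

lemma integral_sampleMean [Nonempty ι] {Y : Ω → ℝ} (hY : Integrable Y P) :
    ∫ ω, sampleMean Y ω ∂(Measure.pi fun _ : ι => P) = P[Y] := by
  have hcard : (Fintype.card ι : ℝ) ≠ 0 := by exact_mod_cast Fintype.card_ne_zero
  simp only [sampleMean]
  rw [integral_const_mul, integral_finsetSum _ fun i _ => integrable_comp_eval hY]
  simp only [integral_comp_eval (μ := fun _ : ι => P) hY.aestronglyMeasurable,
    Finset.sum_const, Finset.card_univ, nsmul_eq_mul]
  field_simp

lemma variance_sampleMean {Y : Ω → ℝ} (hY : MemLp Y 2 P) :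
    Var[sampleMean Y; Measure.pi fun _ : ι => P] = Var[Y; P] / Fintype.card ι := by
  have hsum := variance_sum_pi (μ := fun _ : ι => P) fun _ => hY
  have hsm : sampleMean Y =
      fun ω : ι → Ω => (1 / (Fintype.card ι : ℝ)) * (∑ i, fun ω : ι → Ω => Y (ω i)) ω := by
    ext ω; simp [sampleMean]
  rw [hsm, variance_const_mul, hsum]
  simp only [Finset.sum_const, Finset.card_univ, nsmul_eq_mul]
  rcases eq_or_ne (Fintype.card ι : ℝ) 0 with h | h
  · simp [h]
  · field_simp

end SampleMean

/-- Quantitative bias bound for the log-partition estimator: for `Y` bounded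
below by `c > 0` and bounded above, with mean `μ`,
`log μ - E[T_n] ≤ Var(Y)/(2 c² n)`. -/
theorem stmt_11 {Ω : Type*} [MeasurableSpace Ω]
    (P : Measure Ω) [IsProbabilityMeasure P]
    (Y : Ω → ℝ) (hYm : Measurable Y)
    (c C : ℝ) (hc : 0 < c) (hbd : ∀ ω, c ≤ Y ω ∧ Y ω ≤ C)
    (μval : ℝ) (hμ : μval = ∫ ω, Y ω ∂P)
    (n : ℕ) (hn : 0 < n) :
    Real.log μval -
        (∫ ω : Fin n → Ω, Real.log ((1 / (n : ℝ)) * ∑ i, Y (ω i))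
          ∂(Measure.pi fun _ => P))
      ≤ (∫ ω, (Y ω - μval) ^ 2 ∂P) / (2 * c ^ 2 * n) := by
  have : Nonempty (Fin n) := ⟨⟨0, hn⟩⟩
  have hY : MemLp Y 2 P := memLp_of_bounded (ae_of_all _ hbd) hYm.aestronglyMeasurable 2
  have hmean : ∫ ω : Fin n → Ω, sampleMean Y ω ∂(Measure.pi fun _ => P) = μval :=
    (integral_sampleMean (hY.integrable one_le_two)).trans hμ.symm
  have hvar : Var[Y; P] = ∫ ω, (Y ω - μval) ^ 2 ∂P := by
    rw [hμ, variance_eq_integral hYm.aemeasurable]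
  have key := log_integral_sub_integral_log_le hc (memLp_sampleMean (ι := Fin n) hY)
    (ae_of_all _ (le_sampleMean fun ω => (hbd ω).1))
  rw [hmean, variance_sampleMean hY, Fintype.card_fin, hvar, div_div, mul_comm (n : ℝ)] at key
  simpa only [sampleMean_fin] using key
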